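/- Let F be a field and O the split octonion algebra over F. For every u ∈ F³, the map δ₁(u) : O → O defined by (α', u', v', β') ↦ (α' − u·v', (α' − β' − u·v')u + u', v' − u'×u, β' + u·v') is an F-algebra automorphism of O, i.e. an F-linear bijection satisfying δ₁(u)(a b) = δ₁(u)(a) δ₁(u)(b) for all a, b ∈ O. -/

import Mathlib

namespace OctoPaper

variable (F : Type*) [Field F]

/-- The split (Zorn matrix) octonion algebra over `F`. -/
structure Octo where
  x1 : F
  u : Fin 3 → F
  v : Fin 3 → F
  x8 : F

variable {F}

/-- Dot product on `F³`. -/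
def dot (u v : Fin 3 → F) : F := u 0 * v 0 + u 1 * v 1 + u 2 * v 2

/-- Cross product on `F³`. -/
def cross (u v : Fin 3 → F) : Fin 3 → F :=
  ![u 1 * v 2 - u 2 * v 1, u 2 * v 0 - u 0 * v 2, u 0 * v 1 - u 1 * v 0]

instance : Mul (Octo F) where
  mul x y :=
    ⟨x.x1 * y.x1 + dot x.u y.v,
     fun i => x.x1 * y.u i + y.x8 * x.u i - cross x.v y.v i,
     fun i => y.x1 * x.v i + x.x8 * y.v i + cross x.u y.u i,
     x.x8 * y.x8 + dot x.v y.u⟩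

instance : Add (Octo F) where add x y := ⟨x.x1 + y.x1, x.u + y.u, x.v + y.v, x.x8 + y.x8⟩
instance : Neg (Octo F) where neg x := ⟨-x.x1, -x.u, -x.v, -x.x8⟩
instance : Sub (Octo F) where sub x y := x + -y
instance : SMul F (Octo F) where smul c x := ⟨c * x.x1, c • x.u, c • x.v, c * x.x8⟩
instance : One (Octo F) where one := ⟨1, 0, 0, 1⟩
instance : Zero (Octo F) where zero := ⟨0, 0, 0, 0⟩

/-- Trace of an octonion. -/
def tr (x : Octo F) : F := x.x1 + x.x8

/-- Norm of an octonion. -/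
def onorm (x : Octo F) : F := x.x1 * x.x8 - dot x.u x.v

/-- Conjugate of an octonion. -/
def conj (x : Octo F) : Octo F := ⟨x.x8, -x.u, -x.v, x.x1⟩

/-- `g` is an `F`-algebra automorphism of the split octonion algebra:
an `F`-linear bijection preserving multiplication. -/
def IsAut (g : Octo F → Octo F) : Prop :=
  Function.Bijective g ∧
  (∀ x y : Octo F, g (x + y) = g x + g y) ∧
  (∀ (c : F) (x : Octo F), g (c • x) = c • g x) ∧
  (∀ x y : Octo F, g (x * y) = g x * g y)

/-- The automorphism `ρ(g)` of `O` attached to `g ∈ SL₃(F)`. -/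
def rho (g : Matrix.SpecialLinearGroup (Fin 3) F) (x : Octo F) : Octo F :=
  ⟨x.x1, Matrix.vecMul x.u (g : Matrix (Fin 3) (Fin 3) F),
   Matrix.vecMul x.v (Matrix.transpose (↑(g⁻¹) : Matrix (Fin 3) (Fin 3) F)), x.x8⟩

/-- The automorphism `ℏ` of `O`. -/
def hbar (x : Octo F) : Octo F := ⟨x.x8, -x.v, -x.u, x.x1⟩

/-- The automorphism `δ₁(u)` of `O`. -/
def delta1 (w : Fin 3 → F) (y : Octo F) : Octo F :=
  ⟨y.x1 - dot w y.v,
   fun i => (y.x1 - y.x8 - dot w y.v) * w i + y.u i,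
   fun i => y.v i - cross y.u w i,
   y.x8 + dot w y.v⟩

/-- The automorphism `δ₂(v)` of `O`. -/
def delta2 (w : Fin 3 → F) (y : Octo F) : Octo F :=
  ⟨y.x1 + dot y.u w,
   fun i => y.u i + cross y.v w i,
   fun i => (-y.x1 + y.x8 - dot y.u w) * w i + y.v i,
   y.x8 - dot y.u w⟩

end OctoPaper


namespace OctoPaper

@[ext]
lemma Octo.ext {F : Type*} {x y : Octo F} (h1 : x.x1 = y.x1) (hu : x.u = y.u) (hv : x.v = y.v)
    (h8 : x.x8 = y.x8) : x = y := by
  cases x; cases y; simp_all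

variable {F : Type*} [Field F]

section Components

variable (x y : Octo F) (c : F) (w : Fin 3 → F)

@[simp] lemma Octo.add_x1 : (x + y).x1 = x.x1 + y.x1 := rfl
@[simp] lemma Octo.add_u : (x + y).u = x.u + y.u := rfl
@[simp] lemma Octo.add_v : (x + y).v = x.v + y.v := rfl
@[simp] lemma Octo.add_x8 : (x + y).x8 = x.x8 + y.x8 := rfl

@[simp] lemma Octo.smul_x1 : (c • x).x1 = c * x.x1 := rfl
@[simp] lemma Octo.smul_u : (c • x).u = c • x.u := rfl
@[simp] lemma Octo.smul_v : (c • x).v = c • x.v := rfl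
@[simp] lemma Octo.smul_x8 : (c • x).x8 = c * x.x8 := rfl

@[simp] lemma Octo.mul_x1 : (x * y).x1 = x.x1 * y.x1 + dot x.u y.v := rfl
@[simp] lemma Octo.mul_u (i : Fin 3) :
    (x * y).u i = x.x1 * y.u i + y.x8 * x.u i - cross x.v y.v i := rfl
@[simp] lemma Octo.mul_v (i : Fin 3) :
    (x * y).v i = y.x1 * x.v i + x.x8 * y.v i + cross x.u y.u i := rfl
@[simp] lemma Octo.mul_x8 : (x * y).x8 = x.x8 * y.x8 + dot x.v y.u := rfl

@[simp] lemma delta1_x1 : (delta1 w x).x1 = x.x1 - dot w x.v := rfl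
@[simp] lemma delta1_u (i : Fin 3) :
    (delta1 w x).u i = (x.x1 - x.x8 - dot w x.v) * w i + x.u i := rfl
@[simp] lemma delta1_v (i : Fin 3) : (delta1 w x).v i = x.v i - cross x.u w i := rfl
@[simp] lemma delta1_x8 : (delta1 w x).x8 = x.x8 + dot w x.v := rfl

end Components

lemma delta1_neg_rightInverse (w : Fin 3 → F) :
    Function.RightInverse (delta1 (-w)) (delta1 w) := by
  intro x
  ext : 1 <;> try (funext i; fin_cases i)
  all_goals simp [dot, cross]; ring

lemma delta1_bijective (w : Fin 3 → F) : Function.Bijective (delta1 w : Octo F → Octo F) := by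
  have h := delta1_neg_rightInverse (-w)
  rw [neg_neg] at h
  exact ⟨h.injective, (delta1_neg_rightInverse w).surjective⟩

lemma delta1_add (w : Fin 3 → F) (x y : Octo F) :
    delta1 w (x + y) = delta1 w x + delta1 w y := by
  ext : 1 <;> try (funext i; fin_cases i)
  all_goals simp [dot, cross]; ring

lemma delta1_smul (w : Fin 3 → F) (c : F) (x : Octo F) :
    delta1 w (c • x) = c • delta1 w x := by
  ext : 1 <;> try (funext i; fin_cases i)
  all_goals simp [dot, cross]; ring

lemma delta1_mul (w : Fin 3 → F) (x y : Octo F) :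
    delta1 w (x * y) = delta1 w x * delta1 w y := by
  ext : 1 <;> try (funext i; fin_cases i)
  all_goals simp [dot, cross]; ring

end OctoPaper

open OctoPaper

/-- For every `u ∈ F³` the map `δ₁(u)` is an `F`-algebra automorphism of the
split octonions. -/
theorem delta1_isAut (F : Type*) [Field F] (u : Fin 3 → F) :
    IsAut (delta1 u : Octo F → Octo F) :=
  ⟨delta1_bijective u, delta1_add u, delta1_smul u, delta1_mul u⟩
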